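/- Let 𝒜 : ℝ^{n×n} → ℝ^m satisfy 4r-RIP with constant δ_{4r}, let X ∈ ℝ^{n×r}, and define ∇f(U) := Σ_{k=1}^m ⟨A_k, UUᵀ − XXᵀ⟩ A_k U and ∇F(U) := (UUᵀ − XXᵀ)U. Then for any U ∈ ℝ^{n×r} with dist(U, X) ≤ (1/4)‖X‖_{op}: (i) for every H ∈ ℝ^{n×r}, |⟨∇F(U) − ∇f(U), H⟩| ≤ δ_{4r}·‖UUᵀ − XXᵀ‖_F·‖HUᵀ‖_F; and (ii) ‖∇f(U) − ∇F(U)‖_F ≤ δ_{4r}·‖UUᵀ − XXᵀ‖_F·‖U‖_{op}. -/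

import Mathlib

/-!
With `Y = UUᵀ - XXᵀ`, the identity `⟨A_k U, H⟩ = ⟨A_k, H Uᵀ⟩` rewrites `⟨∇F(U) - ∇f(U), H⟩` as
`⟨Y, H Uᵀ⟩ - ⟨𝒜 Y, 𝒜 (H Uᵀ)⟩`. As `Y` has rank at most `2r` and `H Uᵀ` rank at most `r`, the RIP
controls `‖𝒜 Z‖²` for every `Z` in their span, and polarization turns this into the bound
`δ ‖Y‖_F ‖H Uᵀ‖_F` on the difference of inner products. For (ii), take `H = ∇F(U) - ∇f(U)` and use
`‖H Uᵀ‖_F ≤ ‖U‖_op ‖H‖_F`.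
-/

open Matrix

noncomputable def vnorm {ι : Type*} [Fintype ι] (v : ι → ℝ) : ℝ :=
  Real.sqrt (∑ i, v i ^ 2)

noncomputable def frob {α β : Type*} [Fintype α] [Fintype β] (M : Matrix α β ℝ) : ℝ :=
  Real.sqrt (∑ i, ∑ j, M i j ^ 2)

noncomputable def sval {α β : Type*} [Fintype α] [Fintype β] (M : Matrix α β ℝ) (k : ℕ) : ℝ :=
  sSup { t : ℝ | ∃ V : Submodule ℝ (β → ℝ), Module.finrank ℝ V = k ∧
    ∀ v ∈ V, t * vnorm v ≤ vnorm (M.mulVec v) }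

noncomputable def opNorm {α β : Type*} [Fintype α] [Fintype β] (M : Matrix α β ℝ) : ℝ :=
  sval M 1

noncomputable def pdist {α ρ : Type*} [Fintype α] [Fintype ρ] [DecidableEq ρ]
    (U X : Matrix α ρ ℝ) : ℝ :=
  sInf { d : ℝ | ∃ R : Matrix ρ ρ ℝ, Rᵀ * R = 1 ∧ d = frob (U - X * R) }

noncomputable def mip {α β : Type*} [Fintype α] [Fintype β] (A B : Matrix α β ℝ) : ℝ :=
  ∑ i, ∑ j, A i j * B i j

noncomputable def mapA {m : ℕ} {α β : Type*} [Fintype α] [Fintype β]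
    (A : Fin m → Matrix α β ℝ) (Z : Matrix α β ℝ) : Fin m → ℝ :=
  fun k => mip (A k) Z

def HasRIP {m n₁ n₂ : ℕ} (A : Fin m → Matrix (Fin n₁) (Fin n₂) ℝ) (s : ℕ) (δ : ℝ) : Prop :=
  ∀ Z : Matrix (Fin n₁) (Fin n₂) ℝ, Z.rank ≤ s →
    (1 - δ) * frob Z ^ 2 ≤ ∑ k, mapA A Z k ^ 2 ∧
      ∑ k, mapA A Z k ^ 2 ≤ (1 + δ) * frob Z ^ 2

noncomputable def gradU {m n₁ n₂ r : ℕ} (A : Fin m → Matrix (Fin n₁) (Fin n₂) ℝ)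
    (M : Matrix (Fin n₁) (Fin n₂) ℝ)
    (U : Matrix (Fin n₁) (Fin r) ℝ) (V : Matrix (Fin n₂) (Fin r) ℝ) :
    Matrix (Fin n₁) (Fin r) ℝ :=
  (∑ k, mip (A k) (U * Vᵀ - M) • (A k * V)) + (1 / 4 : ℝ) • (U * (Uᵀ * U - Vᵀ * V))

noncomputable def gradV {m n₁ n₂ r : ℕ} (A : Fin m → Matrix (Fin n₁) (Fin n₂) ℝ)
    (M : Matrix (Fin n₁) (Fin n₂) ℝ)
    (U : Matrix (Fin n₁) (Fin r) ℝ) (V : Matrix (Fin n₂) (Fin r) ℝ) :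
    Matrix (Fin n₂) (Fin r) ℝ :=
  (∑ k, mip (A k) (U * Vᵀ - M) • ((A k)ᵀ * U)) + (1 / 4 : ℝ) • (V * (Vᵀ * V - Uᵀ * U))

noncomputable def gradg {m n₁ n₂ r : ℕ} (A : Fin m → Matrix (Fin n₁) (Fin n₂) ℝ)
    (M : Matrix (Fin n₁) (Fin n₂) ℝ)
    (U : Matrix (Fin n₁) (Fin r) ℝ) (V : Matrix (Fin n₂) (Fin r) ℝ) :
    Matrix (Fin n₁ ⊕ Fin n₂) (Fin r) ℝ :=
  Matrix.fromRows (gradU A M U V) (gradV A M U V)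

open scoped InnerProductSpace

section Frobenius

variable {α β : Type*}

def frobVec : Matrix α β ℝ →ₗ[ℝ] EuclideanSpace ℝ (α × β) where
  toFun M := WithLp.toLp 2 fun p => M p.1 p.2
  map_add' _ _ := rfl
  map_smul' _ _ := rfl

theorem frobVec_apply (M : Matrix α β ℝ) : frobVec M = WithLp.toLp 2 fun p => M p.1 p.2 := rfl

variable [Fintype α] [Fintype β]

theorem mip_eq_inner (A B : Matrix α β ℝ) : mip A B = ⟪frobVec A, frobVec B⟫_ℝ := by
  simp only [mip, frobVec_apply, EuclideanSpace.inner_toLp_toLp, dotProduct, star_trivial,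
    Fintype.sum_prod_type, mul_comm]

theorem frob_eq_norm (M : Matrix α β ℝ) : frob M = ‖frobVec M‖ := by
  simp [frob, EuclideanSpace.norm_eq, frobVec_apply, Fintype.sum_prod_type]

theorem frob_nonneg (M : Matrix α β ℝ) : 0 ≤ frob M := Real.sqrt_nonneg _

theorem frob_sq (M : Matrix α β ℝ) : frob M ^ 2 = mip M M := by
  rw [frob_eq_norm, mip_eq_inner, real_inner_self_eq_norm_sq]

theorem frob_neg (M : Matrix α β ℝ) : frob (-M) = frob M := by
  simp only [frob_eq_norm, map_neg, norm_neg]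

theorem mip_sub_left (A B C : Matrix α β ℝ) : mip (A - B) C = mip A C - mip B C := by
  simp only [mip_eq_inner, map_sub, inner_sub_left]

theorem mip_smul_left (c : ℝ) (A B : Matrix α β ℝ) : mip (c • A) B = c * mip A B := by
  simp only [mip_eq_inner, map_smul, real_inner_smul_left]

theorem mip_sum_left {ι : Type*} (s : Finset ι) (A : ι → Matrix α β ℝ) (B : Matrix α β ℝ) :
    mip (∑ i ∈ s, A i) B = ∑ i ∈ s, mip (A i) B := by
  simp only [mip_eq_inner, map_sum, sum_inner]

theorem mip_eq_trace (A B : Matrix α β ℝ) : mip A B = (Aᵀ * B).trace := by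
  simp only [mip, trace, diag, mul_apply, transpose_apply]
  exact Finset.sum_comm

theorem mip_mul_eq_mip_mul_transpose {γ : Type*} [Fintype γ] (Y : Matrix α β ℝ)
    (U : Matrix β γ ℝ) (H : Matrix α γ ℝ) : mip (Y * U) H = mip Y (H * Uᵀ) := by
  rw [mip_eq_trace, mip_eq_trace, transpose_mul, Matrix.mul_assoc, trace_mul_comm,
    Matrix.mul_assoc]

end Frobenius

section EuclideanNorm

variable {β : Type*} [Fintype β]

theorem vnorm_eq_norm (v : β → ℝ) : vnorm v = ‖WithLp.toLp 2 v‖ := by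
  simp [vnorm, EuclideanSpace.norm_eq]

theorem vnorm_nonneg (v : β → ℝ) : 0 ≤ vnorm v := Real.sqrt_nonneg _

theorem vnorm_pos {v : β → ℝ} (hv : v ≠ 0) : 0 < vnorm v := by
  rw [vnorm_eq_norm]
  simpa using hv

theorem vnorm_smul (c : ℝ) (v : β → ℝ) : vnorm (c • v) = |c| * vnorm v := by
  rw [vnorm_eq_norm, vnorm_eq_norm, WithLp.toLp_smul, norm_smul, Real.norm_eq_abs]

theorem vnorm_sq (v : β → ℝ) : vnorm v ^ 2 = ∑ i, v i ^ 2 :=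
  Real.sq_sqrt (Finset.sum_nonneg fun _ _ => sq_nonneg _)

end EuclideanNorm

section Polarization

variable {F G : Type*} [NormedAddCommGroup F] [InnerProductSpace ℝ F]
  [NormedAddCommGroup G] [InnerProductSpace ℝ G]

theorem norm_smul_add_smul_sq (a b : ℝ) (x y : F) :
    ‖a • x + b • y‖ ^ 2 = a ^ 2 * ‖x‖ ^ 2 + 2 * a * b * ⟪x, y⟫_ℝ + b ^ 2 * ‖y‖ ^ 2 := by
  rw [norm_add_sq_real, norm_smul, norm_smul, real_inner_smul_left, real_inner_smul_right,
    Real.norm_eq_abs, Real.norm_eq_abs, mul_pow, mul_pow, sq_abs, sq_abs]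
  ring

/-- Polarize at `‖y'‖ • x ± ‖x'‖ • y`: the two primed vectors then have equal norms, which is
what turns the relative error `δ` on squared norms into `δ ‖x'‖ ‖y'‖` on inner products. -/
theorem abs_inner_sub_inner_le_of_abs_norm_sq_sub_le {x y : F} {x' y' : G} {δ : ℝ}
    (h : ∀ a b : ℝ, |‖a • x + b • y‖ ^ 2 - ‖a • x' + b • y'‖ ^ 2| ≤ δ * ‖a • x' + b • y'‖ ^ 2) :
    |⟪x, y⟫_ℝ - ⟪x', y'⟫_ℝ| ≤ δ * ‖x'‖ * ‖y'‖ := by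
  rcases eq_or_ne x' 0 with rfl | hx'
  · have hx : x = 0 := by simpa using h 1 0
    simp [hx]
  rcases eq_or_ne y' 0 with rfl | hy'
  · have hy : y = 0 := by simpa using h 0 1
    simp [hy]
  set p := ‖x'‖
  set q := ‖y'‖
  have hpq : 0 < 4 * p * q := by positivity
  refine le_of_mul_le_mul_right ?_ hpq
  calc |⟪x, y⟫_ℝ - ⟪x', y'⟫_ℝ| * (4 * p * q)
      = |(‖q • x + p • y‖ ^ 2 - ‖q • x' + p • y'‖ ^ 2)
          - (‖q • x + (-p) • y‖ ^ 2 - ‖q • x' + (-p) • y'‖ ^ 2)| := by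
        rw [← abs_of_pos hpq, ← abs_mul]
        simp only [norm_smul_add_smul_sq]
        ring_nf
    _ ≤ |‖q • x + p • y‖ ^ 2 - ‖q • x' + p • y'‖ ^ 2|
          + |‖q • x + (-p) • y‖ ^ 2 - ‖q • x' + (-p) • y'‖ ^ 2| := abs_sub _ _
    _ ≤ δ * ‖q • x' + p • y'‖ ^ 2 + δ * ‖q • x' + (-p) • y'‖ ^ 2 :=
        add_le_add (h q p) (h q (-p))
    _ = δ * p * q * (4 * p * q) := by
        simp only [norm_smul_add_smul_sq]
        ring

end Polarization

section Rank

variable {α β : Type*} [Fintype β] {K : Type*} [Field K]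

theorem Matrix.rank_smul_add_smul_le (a b : K) (Y Z : Matrix α β K) :
    (a • Y + b • Z).rank ≤ Y.rank + Z.rank := by
  have hlin : (a • Y + b • Z).mulVecLin = a • Y.mulVecLin + b • Z.mulVecLin := by
    ext; simp
  rw [Matrix.rank, Matrix.rank, Matrix.rank, hlin]
  refine (Submodule.finrank_mono ?_).trans (Submodule.finrank_add_le_finrank_add_finrank _ _)
  exact (LinearMap.range_add_le _ _).trans
    (sup_le_sup (LinearMap.range_smul_le_range _ _) (LinearMap.range_smul_le_range _ _))

theorem Matrix.rank_sub_le (Y Z : Matrix α β K) : (Y - Z).rank ≤ Y.rank + Z.rank := by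
  simpa [sub_eq_add_neg] using Matrix.rank_smul_add_smul_le (1 : K) (-1) Y Z

end Rank

section Measurements

variable {m : ℕ} {α β : Type*} [Fintype α] [Fintype β]

noncomputable def measurementMap (A : Fin m → Matrix α β ℝ) :
    Matrix α β ℝ →ₗ[ℝ] EuclideanSpace ℝ (Fin m) where
  toFun Z := WithLp.toLp 2 (mapA A Z)
  map_add' Y Z := by ext k; simp [mapA, mip_eq_inner, inner_add_right]
  map_smul' c Z := by ext k; simp [mapA, mip_eq_inner, real_inner_smul_right]

theorem inner_measurementMap (A : Fin m → Matrix α β ℝ) (Y Z : Matrix α β ℝ) :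
    ⟪measurementMap A Y, measurementMap A Z⟫_ℝ = ∑ k, mapA A Y k * mapA A Z k := by
  simp [measurementMap, EuclideanSpace.inner_toLp_toLp, dotProduct, mul_comm]

theorem norm_measurementMap_sq (A : Fin m → Matrix α β ℝ) (Z : Matrix α β ℝ) :
    ‖measurementMap A Z‖ ^ 2 = ∑ k, mapA A Z k ^ 2 := by
  simp [measurementMap, EuclideanSpace.norm_sq_eq]

end Measurements

section RIP

variable {m n₁ n₂ s : ℕ} {A : Fin m → Matrix (Fin n₁) (Fin n₂) ℝ} {δ : ℝ}

theorem HasRIP.abs_norm_sq_sub_le (hRIP : HasRIP A s δ) {Z : Matrix (Fin n₁) (Fin n₂) ℝ}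
    (hZ : Z.rank ≤ s) :
    |‖measurementMap A Z‖ ^ 2 - ‖frobVec Z‖ ^ 2| ≤ δ * ‖frobVec Z‖ ^ 2 := by
  obtain ⟨hlow, hup⟩ := hRIP Z hZ
  rw [norm_measurementMap_sq, ← frob_eq_norm, abs_le]
  constructor <;> linarith

theorem HasRIP.mul_frob_nonneg (hRIP : HasRIP A s δ) {Z : Matrix (Fin n₁) (Fin n₂) ℝ}
    (hZ : Z.rank ≤ s) : 0 ≤ δ * frob Z := by
  have h := (hRIP.abs_norm_sq_sub_le hZ).trans' (abs_nonneg _)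
  rw [← frob_eq_norm, sq, ← mul_assoc] at h
  rcases (frob_nonneg Z).eq_or_lt with h0 | hpos
  · simp [← h0]
  · exact nonneg_of_mul_nonneg_left h hpos

theorem HasRIP.abs_sum_mapA_mul_sub_mip_le (hRIP : HasRIP A s δ)
    {Y Z : Matrix (Fin n₁) (Fin n₂) ℝ} (hYZ : Y.rank + Z.rank ≤ s) :
    |∑ k, mapA A Y k * mapA A Z k - mip Y Z| ≤ δ * frob Y * frob Z := by
  have h := abs_inner_sub_inner_le_of_abs_norm_sq_sub_le
    (x := measurementMap A Y) (y := measurementMap A Z) (x' := frobVec Y) (y' := frobVec Z)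
    fun a b => by
      simpa only [← map_smul, ← map_add] using
        hRIP.abs_norm_sq_sub_le ((Matrix.rank_smul_add_smul_le a b Y Z).trans hYZ)
  rwa [inner_measurementMap, ← mip_eq_inner, ← frob_eq_norm, ← frob_eq_norm] at h

end RIP

section OperatorNorm

variable {α β : Type*} [Fintype α] [Fintype β]

def lineStretchBounds (M : Matrix α β ℝ) : Set ℝ :=
  { t : ℝ | ∃ V : Submodule ℝ (β → ℝ), Module.finrank ℝ V = 1 ∧
    ∀ v ∈ V, t * vnorm v ≤ vnorm (M *ᵥ v) }

theorem opNorm_eq_sSup_lineStretchBounds (M : Matrix α β ℝ) :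
    opNorm M = sSup (lineStretchBounds M) := rfl

theorem vnorm_mulVec_le_frob_mul (M : Matrix α β ℝ) (v : β → ℝ) :
    vnorm (M *ᵥ v) ≤ frob M * vnorm v := by
  have hsq : vnorm (M *ᵥ v) ^ 2 ≤ (frob M * vnorm v) ^ 2 := by
    rw [mul_pow, vnorm_sq, vnorm_sq, frob, Real.sq_sqrt (by positivity), Finset.sum_mul]
    exact Finset.sum_le_sum fun i _ => Finset.sum_mul_sq_le_sq_mul_sq _ (M i) v
  exact (pow_le_pow_iff_left₀ (vnorm_nonneg _) (mul_nonneg (frob_nonneg M) (vnorm_nonneg v))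
    two_ne_zero).mp hsq

theorem bddAbove_lineStretchBounds (M : Matrix α β ℝ) : BddAbove (lineStretchBounds M) := by
  refine ⟨frob M, fun t ⟨V, hV, ht⟩ => ?_⟩
  obtain ⟨v, hvV, hv⟩ := Submodule.exists_mem_ne_zero_of_ne_bot
    (Submodule.one_le_finrank_iff.mp hV.ge)
  exact le_of_mul_le_mul_right ((ht v hvV).trans (vnorm_mulVec_le_frob_mul M v)) (vnorm_pos hv)

theorem div_mem_lineStretchBounds (M : Matrix α β ℝ) {v : β → ℝ} (hv : v ≠ 0) :
    vnorm (M *ᵥ v) / vnorm v ∈ lineStretchBounds M := by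
  refine ⟨ℝ ∙ v, finrank_span_singleton hv, fun w hw => le_of_eq ?_⟩
  obtain ⟨c, rfl⟩ := Submodule.mem_span_singleton.mp hw
  have := vnorm_pos hv
  rw [mulVec_smul, vnorm_smul, vnorm_smul]
  field_simp

theorem lineStretchBounds_eq_empty [IsEmpty β] (M : Matrix α β ℝ) : lineStretchBounds M = ∅ :=
  Set.eq_empty_of_forall_notMem fun _ ⟨V, hV, _⟩ => by
    simp [Module.finrank_zero_of_subsingleton] at hV

theorem vnorm_mulVec_le_opNorm_mul (M : Matrix α β ℝ) (v : β → ℝ) :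
    vnorm (M *ᵥ v) ≤ opNorm M * vnorm v := by
  rcases eq_or_ne v 0 with rfl | hv
  · simp [vnorm]
  calc vnorm (M *ᵥ v) = vnorm (M *ᵥ v) / vnorm v * vnorm v := by
        field_simp [(vnorm_pos hv).ne']
    _ ≤ opNorm M * vnorm v := mul_le_mul_of_nonneg_right
        (le_csSup (bddAbove_lineStretchBounds M) (div_mem_lineStretchBounds M hv)) (vnorm_nonneg v)

theorem opNorm_nonneg (M : Matrix α β ℝ) : 0 ≤ opNorm M := by
  rcases isEmpty_or_nonempty β with hβ | ⟨⟨j⟩⟩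
  · rw [opNorm_eq_sSup_lineStretchBounds, lineStretchBounds_eq_empty, Real.sSup_empty]
  classical
  have hv : Pi.single j 1 ≠ (0 : β → ℝ) := by simp
  exact nonneg_of_mul_nonneg_left
    ((vnorm_nonneg _).trans (vnorm_mulVec_le_opNorm_mul M _)) (vnorm_pos hv)

theorem frob_mul_transpose_le {γ : Type*} [Fintype γ] (D : Matrix α β ℝ) (U : Matrix γ β ℝ) :
    frob (D * Uᵀ) ≤ opNorm U * frob D := by
  have hrow : ∀ i, ∑ j, (D * Uᵀ) i j ^ 2 ≤ opNorm U ^ 2 * ∑ k, D i k ^ 2 := fun i => by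
    have h : vnorm (U *ᵥ D i) ^ 2 ≤ (opNorm U * vnorm (D i)) ^ 2 :=
      pow_le_pow_left₀ (vnorm_nonneg _) (vnorm_mulVec_le_opNorm_mul U (D i)) 2
    rw [mul_pow, vnorm_sq, vnorm_sq] at h
    simpa [mul_apply, mulVec, dotProduct, mul_comm] using h
  rw [frob, frob, ← Real.sqrt_sq (opNorm_nonneg U), ← Real.sqrt_mul (sq_nonneg _),
    Finset.mul_sum]
  exact Real.sqrt_le_sqrt (Finset.sum_le_sum fun i _ => hrow i)

end OperatorNorm

section Gradient

variable {n r m s : ℕ} {A : Fin m → Matrix (Fin n) (Fin n) ℝ} {δ : ℝ}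

theorem mip_mul_sub_sum_smul (A : Fin m → Matrix (Fin n) (Fin n) ℝ)
    (Y : Matrix (Fin n) (Fin n) ℝ) (U H : Matrix (Fin n) (Fin r) ℝ) :
    mip (Y * U - ∑ k, mip (A k) Y • (A k * U)) H =
      mip Y (H * Uᵀ) - ∑ k, mapA A Y k * mapA A (H * Uᵀ) k := by
  simp only [mip_sub_left, mip_sum_left, mip_smul_left, mip_mul_eq_mip_mul_transpose, mapA]

theorem HasRIP.abs_mip_mul_sub_sum_smul_le (hRIP : HasRIP A s δ)
    {Y : Matrix (Fin n) (Fin n) ℝ} (hY : Y.rank + r ≤ s) (U H : Matrix (Fin n) (Fin r) ℝ) :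
    |mip (Y * U - ∑ k, mip (A k) Y • (A k * U)) H| ≤ δ * frob Y * frob (H * Uᵀ) := by
  have hH : (H * Uᵀ).rank ≤ r := (H.rank_mul_le_left Uᵀ).trans H.rank_le_width
  rw [mip_mul_sub_sum_smul, abs_sub_comm]
  exact hRIP.abs_sum_mapA_mul_sub_mip_le (by omega)

theorem frob_le_of_forall_abs_mip_le {G U : Matrix (Fin n) (Fin r) ℝ} {c : ℝ} (hc : 0 ≤ c)
    (h : ∀ H, |mip G H| ≤ c * frob (H * Uᵀ)) : frob G ≤ c * opNorm U := by
  rcases (frob_nonneg G).eq_or_lt with h0 | hpos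
  · rw [← h0]
    exact mul_nonneg hc (opNorm_nonneg U)
  refine le_of_mul_le_mul_right ?_ hpos
  calc frob G * frob G = |mip G G| := by rw [← frob_sq, abs_of_nonneg (sq_nonneg _), sq]
    _ ≤ c * frob (G * Uᵀ) := h G
    _ ≤ c * opNorm U * frob G := by
        rw [mul_assoc]
        exact mul_le_mul_of_nonneg_left (frob_mul_transpose_le G U) hc

end Gradient

theorem gradient_concentration_general {n r m : ℕ}
    (A : Fin m → Matrix (Fin n) (Fin n) ℝ) (δ : ℝ)
    (hRIP : HasRIP A (4 * r) δ)
    (X U : Matrix (Fin n) (Fin r) ℝ) :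
    (∀ H : Matrix (Fin n) (Fin r) ℝ,
      |mip ((U * Uᵀ - X * Xᵀ) * U - ∑ k, mip (A k) (U * Uᵀ - X * Xᵀ) • (A k * U)) H| ≤
        δ * frob (U * Uᵀ - X * Xᵀ) * frob (H * Uᵀ)) ∧
    frob ((∑ k, mip (A k) (U * Uᵀ - X * Xᵀ) • (A k * U)) - (U * Uᵀ - X * Xᵀ) * U) ≤
      δ * frob (U * Uᵀ - X * Xᵀ) * opNorm U := by
  set Y := U * Uᵀ - X * Xᵀ
  have hrank : Y.rank ≤ 2 * r := by
    have hU := (U.rank_mul_le_left Uᵀ).trans U.rank_le_width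
    have hX := (X.rank_mul_le_left Xᵀ).trans X.rank_le_width
    linarith [Matrix.rank_sub_le (U * Uᵀ) (X * Xᵀ)]
  have hgrad := hRIP.abs_mip_mul_sub_sum_smul_le (Y := Y) (by omega) U
  refine ⟨hgrad, ?_⟩
  rw [← frob_neg, neg_sub]
  exact frob_le_of_forall_abs_mip_le (hRIP.mul_frob_nonneg (by omega)) hgrad

/-- Gradient concentration via RIP. -/
theorem gradient_concentration {n r m : ℕ}
    (A : Fin m → Matrix (Fin n) (Fin n) ℝ) (δ : ℝ)
    (hRIP : HasRIP A (4 * r) δ)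
    (X U : Matrix (Fin n) (Fin r) ℝ)
    (hU : pdist U X ≤ (1 / 4) * opNorm X) :
    (∀ H : Matrix (Fin n) (Fin r) ℝ,
      |mip ((U * Uᵀ - X * Xᵀ) * U - ∑ k, mip (A k) (U * Uᵀ - X * Xᵀ) • (A k * U)) H| ≤
        δ * frob (U * Uᵀ - X * Xᵀ) * frob (H * Uᵀ)) ∧
    frob ((∑ k, mip (A k) (U * Uᵀ - X * Xᵀ) • (A k * U)) - (U * Uᵀ - X * Xᵀ) * U) ≤
      δ * frob (U * Uᵀ - X * Xᵀ) * opNorm U :=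
  gradient_concentration_general A δ hRIP X U
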